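/- Let (T, ≤, ⊗, ⊕, e) be a symmetric duoidal lattice whose underlying order is total and such that for every t ∈ T the map c ↦ t ⊕ c preserves arbitrary infima, and let T^d carry the product order and coordinatewise operations. Then the generalized network distance on T^d-graphs satisfies: (1) d_N^⊕(G₁, G₂) = e whenever G₁ = G₂; (2) d_N^⊕(G₁, G₂) = d_N^⊕(G₂, G₁); and (3) d_N^⊕(G₁, G₂) ≤ d_N^⊕(G₁, G₃) ⊕ d_N^⊕(G₃, G₂), for all T^d-graphs G₁, G₂, G₃ on finite vertex sets. -/

import Mathlib

open CategoryTheory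

/-- A symmetric monoidal lattice `(L, ≤, ⊗, e)`: a complete lattice equipped with a
commutative monoid structure whose product is monotone in each argument and whose
unit is the bottom element `e = ⊥`. -/
structure SML (L : Type) [CompleteLattice L] where
  mul : L → L → L
  mul_comm : ∀ a b, mul a b = mul b a
  mul_assoc : ∀ a b c, mul (mul a b) c = mul a (mul b c)
  mul_bot : ∀ a, mul a ⊥ = a
  mul_mono : ∀ ⦃a a' b b'⦄, a ≤ a' → b ≤ b' → mul a b ≤ mul a' b'

namespace SML

variable {L : Type} [CompleteLattice L]

lemma le_mul (M : SML L) (a b : L) : a ≤ M.mul a b := by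
  have h := M.mul_mono (le_refl a) (bot_le (a := b))
  rwa [M.mul_bot] at h

/-- The `k`-fold product `t^{⊗k}`. -/
def pow (M : SML L) (t : L) : ℕ → L
  | 0 => ⊥
  | k + 1 => M.mul t (M.pow t k)

/-- The left adjoint `λ_t(s) = inf {c : s ≤ t ⊗ c}` of `c ↦ t ⊗ c`. -/
def lam (M : SML L) (t s : L) : L := sInf {c : L | s ≤ M.mul t c}

/-- For every `t`, the map `c ↦ t ⊗ c` preserves arbitrary infima. -/
def InfPreserving (M : SML L) : Prop :=
  ∀ (t : L) (S : Set L), M.mul t (sInf S) = ⨅ c ∈ S, M.mul t c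

/-- Product of a list of lattice elements. -/
def prodList (M : SML L) : List L → L
  | [] => ⊥
  | a :: l => M.mul a (M.prodList l)

end SML

/-- A symmetric duoidal lattice `(L, ≤, ⊗, ⊕, e)`: two symmetric monoidal lattice
structures `tmul = ⊗` and `omul = ⊕` on the same complete lattice, with the same unit
`e = ⊥`, satisfying the generalized Minkowski inequality
`(s ⊕ t) ⊗ (s' ⊕ t') ≤ (s ⊗ s') ⊕ (t ⊗ t')`. -/
structure SDL (L : Type) [CompleteLattice L] where
  tmul : SML L
  omul : SML L
  duoidal : ∀ s t s' t' : L,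
    tmul.mul (omul.mul s t) (omul.mul s' t') ≤ omul.mul (tmul.mul s s') (tmul.mul t t')

/-- The directed graph distance `δ⃗_⊕(G, G') = sup_{v,v'} λ_{G(v,v')}(G'(v,v'))`. -/
noncomputable def dirDist {L : Type} [CompleteLattice L] (M : SML L) {V : Type}
    (G G' : V → V → L) : L :=
  ⨆ v : V, ⨆ v' : V, M.lam (G v v') (G' v v')

/-- The graph distance `δ_⊕(G, G') = sup {δ⃗_⊕(G, G'), δ⃗_⊕(G', G)}`. -/
noncomputable def graphDist {L : Type} [CompleteLattice L] (M : SML L) {V : Type}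
    (G G' : V → V → L) : L :=
  dirDist M G G' ⊔ dirDist M G' G

/-- The `d`-fold product symmetric monoidal lattice `T^d`, with the product order and
coordinate-wise monoidal product. -/
def SML.pi {T : Type} [CompleteLattice T] (M : SML T) (d : ℕ) : SML (Fin d → T) where
  mul a b := fun i => M.mul (a i) (b i)
  mul_comm a b := funext fun i => M.mul_comm _ _
  mul_assoc a b c := funext fun i => M.mul_assoc _ _ _
  mul_bot a := funext fun i => M.mul_bot _
  mul_mono := by
    intro a a' b b' h h' i
    exact M.mul_mono (h i) (h' i)

/-- The `d`-fold product symmetric duoidal lattice `T^d`. -/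
def SDL.pi {T : Type} [CompleteLattice T] (D : SDL T) (d : ℕ) : SDL (Fin d → T) where
  tmul := D.tmul.pi d
  omul := D.omul.pi d
  duoidal := by
    intro s t s' t' i
    exact D.duoidal _ _ _ _

/-- The generalized network distance `d_N^⊕(G₁, G₂)`: the infimum, over all
correspondences `C ⊆ V₁ × V₂` (both projections surjective), of
`p(δ_⊕(π₁^*G₁, π₂^*G₂))`, where `p(t₁, …, t_d) = sup_i t_i`. -/
noncomputable def networkDist {T : Type} [CompleteLattice T] {d : ℕ}
    (M : SML (Fin d → T)) {V₁ V₂ : Type}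
    (G₁ : V₁ → V₁ → Fin d → T) (G₂ : V₂ → V₂ → Fin d → T) : T :=
  sInf { x : T | ∃ C : Set (V₁ × V₂),
    (∀ v₁ : V₁, ∃ c ∈ C, c.1 = v₁) ∧ (∀ v₂ : V₂, ∃ c ∈ C, c.2 = v₂) ∧
    x = ⨆ i : Fin d,
      graphDist M (fun c c' : C => G₁ c.1.1 c'.1.1) (fun c c' : C => G₂ c.1.2 c'.1.2) i }

/-!
Because `c ↦ t ⊕ c` preserves infima, `λ_t` is its left adjoint: `s ≤ t ⊕ λ_t(s)`. Hence
`λ_t(s) ≤ λ_t(u) ⊕ λ_u(s)`, and composing two correspondences through a middle graph bounds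
the pulled-back graph distance by the ⊕-product of the two distances. The diagonal
correspondence gives `d_N^⊕(G, G) = e`, and transposing a correspondence gives symmetry.
-/

namespace SML

variable {L : Type} [CompleteLattice L] (M : SML L)

lemma lam_le {t s c : L} (h : s ≤ M.mul t c) : M.lam t s ≤ c :=
  sInf_le h

lemma lam_self (t : L) : M.lam t t = ⊥ :=
  le_bot_iff.mp (M.lam_le (M.mul_bot t).ge)

variable {M}

lemma InfPreserving.mul_iInf (hM : M.InfPreserving) (t : L) {ι : Type} (f : ι → L) :
    M.mul t (⨅ j, f j) = ⨅ j, M.mul t (f j) := by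
  rw [iInf, hM t (Set.range f), iInf_range]

lemma InfPreserving.sInf_mul_sInf (hM : M.InfPreserving) (A B : Set L) :
    M.mul (sInf A) (sInf B) = ⨅ x ∈ A, ⨅ y ∈ B, M.mul x y := by
  rw [M.mul_comm, hM]
  refine iInf_congr fun x => iInf_congr fun _ => ?_
  rw [M.mul_comm, hM]

lemma InfPreserving.le_mul_lam (hM : M.InfPreserving) (t s : L) : s ≤ M.mul t (M.lam t s) := by
  rw [lam, hM]
  exact le_iInf₂ fun _ hc => hc

lemma InfPreserving.lam_le_mul_lam (hM : M.InfPreserving) (t u s : L) :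
    M.lam t s ≤ M.mul (M.lam t u) (M.lam u s) := by
  apply M.lam_le
  calc s ≤ M.mul u (M.lam u s) := hM.le_mul_lam u s
    _ ≤ M.mul (M.mul t (M.lam t u)) (M.lam u s) := M.mul_mono (hM.le_mul_lam t u) le_rfl
    _ = M.mul t (M.mul (M.lam t u) (M.lam u s)) := M.mul_assoc _ _ _

lemma InfPreserving.pi {T : Type} [CompleteLattice T] {M : SML T} (hM : M.InfPreserving)
    (d : ℕ) : (M.pi d).InfPreserving := by
  intro t S
  funext i
  change M.mul (t i) (sInf S i) = (⨅ c ∈ S, (M.pi d).mul t c) i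
  rw [sInf_apply, hM.mul_iInf, iInf_subtype']
  simp only [iInf_apply]
  rfl

end SML

section GraphDist

variable {L : Type} [CompleteLattice L] (M : SML L) {V : Type} (A B : V → V → L)

lemma lam_le_dirDist (v v' : V) : M.lam (A v v') (B v v') ≤ dirDist M A B :=
  le_iSup₂_of_le v v' le_rfl

lemma lam_le_graphDist (v v' : V) : M.lam (A v v') (B v v') ≤ graphDist M A B :=
  le_sup_of_le_left (lam_le_dirDist M A B v v')

lemma lam_le_graphDist' (v v' : V) : M.lam (B v v') (A v v') ≤ graphDist M A B :=
  le_sup_of_le_right (lam_le_dirDist M B A v v')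

lemma graphDist_comm : graphDist M A B = graphDist M B A :=
  sup_comm _ _

lemma graphDist_self : graphDist M A A = ⊥ := by
  simp [graphDist, dirDist, M.lam_self]

lemma dirDist_comp_equiv {W : Type} (e : W ≃ V) :
    dirDist M (fun w w' => A (e w) (e w')) (fun w w' => B (e w) (e w')) = dirDist M A B := by
  simp only [dirDist]
  rw [← e.iSup_comp]
  exact iSup_congr fun w => e.iSup_comp (g := fun v' => M.lam (A (e w) v') (B (e w) v'))

lemma graphDist_comp_equiv {W : Type} (e : W ≃ V) :
    graphDist M (fun w w' => A (e w) (e w')) (fun w w' => B (e w) (e w')) = graphDist M A B := by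
  simp only [graphDist, dirDist_comp_equiv]

end GraphDist

namespace SetRel

variable {α β γ : Type}

def IsCorrespondence (C : SetRel α β) : Prop :=
  (∀ a, ∃ c ∈ C, c.1 = a) ∧ (∀ b, ∃ c ∈ C, c.2 = b)

lemma isCorrespondence_diagonal : IsCorrespondence (Set.diagonal α) :=
  ⟨fun a => ⟨(a, a), rfl, rfl⟩, fun a => ⟨(a, a), rfl, rfl⟩⟩

lemma IsCorrespondence.inv {C : SetRel α β} (hC : C.IsCorrespondence) : C.inv.IsCorrespondence :=
  ⟨fun b => let ⟨c, hc, hcb⟩ := hC.2 b; ⟨c.swap, hc, hcb⟩,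
   fun a => let ⟨c, hc, hca⟩ := hC.1 a; ⟨c.swap, hc, hca⟩⟩

lemma IsCorrespondence.comp {R : SetRel α β} {S : SetRel β γ} (hR : R.IsCorrespondence)
    (hS : S.IsCorrespondence) : (R ○ S).IsCorrespondence := by
  constructor
  · intro a
    obtain ⟨⟨a, b⟩, hab, rfl⟩ := hR.1 a
    obtain ⟨⟨b, c⟩, hbc, rfl⟩ := hS.1 b
    exact ⟨(a, c), ⟨b, hab, hbc⟩, rfl⟩
  · intro c
    obtain ⟨⟨b, c⟩, hbc, rfl⟩ := hS.2 c
    obtain ⟨⟨a, b⟩, hab, rfl⟩ := hR.2 b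
    exact ⟨(a, c), ⟨b, hab, hbc⟩, rfl⟩

variable {X : Type}

def pullbackFst (C : SetRel α β) (G : α → α → X) : C → C → X :=
  fun c c' => G c.1.1 c'.1.1

def pullbackSnd (C : SetRel α β) (G : β → β → X) : C → C → X :=
  fun c c' => G c.1.2 c'.1.2

lemma pullbackFst_diagonal (G : α → α → X) :
    pullbackFst (Set.diagonal α) G = pullbackSnd (Set.diagonal α) G := by
  funext c c'
  simp only [pullbackFst, pullbackSnd, c.2.out, c'.2.out]

variable {L : Type} [CompleteLattice L] (M : SML L)

lemma graphDist_pullback_inv (C : SetRel α β) (G₁ : β → β → L) (G₂ : α → α → L) :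
    graphDist M (C.inv.pullbackFst G₁) (C.inv.pullbackSnd G₂) =
      graphDist M (C.pullbackFst G₂) (C.pullbackSnd G₁) := by
  let e : C.inv ≃ C := (Equiv.prodComm β α).subtypeEquiv (p := (· ∈ C.inv)) fun _ => Iff.rfl
  rw [graphDist_comm]
  exact graphDist_comp_equiv M (C.pullbackFst G₂) (C.pullbackSnd G₁) e

lemma graphDist_pullback_comp_le (hM : M.InfPreserving) (R : SetRel α β) (S : SetRel β γ)
    (G₁ : α → α → L) (G₂ : β → β → L) (G₃ : γ → γ → L) :
    graphDist M ((R ○ S).pullbackFst G₁) ((R ○ S).pullbackSnd G₃) ≤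
      M.mul (graphDist M (R.pullbackFst G₁) (R.pullbackSnd G₂))
        (graphDist M (S.pullbackFst G₂) (S.pullbackSnd G₃)) := by
  refine sup_le (iSup₂_le fun c c' => ?_) (iSup₂_le fun c c' => ?_) <;>
    obtain ⟨⟨a, c⟩, b, hab, hbc⟩ := c <;> obtain ⟨⟨a', c'⟩, b', hab', hbc'⟩ := c'
  · exact (hM.lam_le_mul_lam _ (G₂ b b') _).trans <| M.mul_mono
      (lam_le_graphDist M (R.pullbackFst G₁) (R.pullbackSnd G₂) ⟨(a, b), hab⟩ ⟨(a', b'), hab'⟩)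
      (lam_le_graphDist M (S.pullbackFst G₂) (S.pullbackSnd G₃) ⟨(b, c), hbc⟩ ⟨(b', c'), hbc'⟩)
  · rw [M.mul_comm]
    exact (hM.lam_le_mul_lam _ (G₂ b b') _).trans <| M.mul_mono
      (lam_le_graphDist' M (S.pullbackFst G₂) (S.pullbackSnd G₃) ⟨(b, c), hbc⟩ ⟨(b', c'), hbc'⟩)
      (lam_le_graphDist' M (R.pullbackFst G₁) (R.pullbackSnd G₂) ⟨(a, b), hab⟩ ⟨(a', b'), hab'⟩)

end SetRel

open SetRel

section NetworkDist

variable {T : Type} [CompleteLattice T] {d : ℕ} (M : SML (Fin d → T)) {V₁ V₂ V₃ : Type}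

lemma networkDist_le {C : SetRel V₁ V₂} (hC : C.IsCorrespondence)
    (G₁ : V₁ → V₁ → Fin d → T) (G₂ : V₂ → V₂ → Fin d → T) :
    networkDist M G₁ G₂ ≤ ⨆ i, graphDist M (C.pullbackFst G₁) (C.pullbackSnd G₂) i :=
  sInf_le ⟨C, hC.1, hC.2, rfl⟩

lemma networkDist_self (G : V₁ → V₁ → Fin d → T) : networkDist M G G = ⊥ := by
  refine le_bot_iff.mp ((networkDist_le M isCorrespondence_diagonal G G).trans_eq ?_)
  simp [pullbackFst_diagonal, graphDist_self]

lemma networkDist_le_swap (G₁ : V₁ → V₁ → Fin d → T) (G₂ : V₂ → V₂ → Fin d → T) :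
    networkDist M G₁ G₂ ≤ networkDist M G₂ G₁ := by
  refine le_sInf ?_
  rintro _ ⟨C, hC₁, hC₂, rfl⟩
  exact (networkDist_le M (IsCorrespondence.inv ⟨hC₁, hC₂⟩) G₁ G₂).trans_eq
    (by rw [graphDist_pullback_inv]; rfl)

lemma networkDist_comm (G₁ : V₁ → V₁ → Fin d → T) (G₂ : V₂ → V₂ → Fin d → T) :
    networkDist M G₁ G₂ = networkDist M G₂ G₁ :=
  le_antisymm (networkDist_le_swap M G₁ G₂) (networkDist_le_swap M G₂ G₁)

lemma networkDist_pi_triangle {M : SML T} (hM : M.InfPreserving) (G₁ : V₁ → V₁ → Fin d → T)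
    (G₂ : V₂ → V₂ → Fin d → T) (G₃ : V₃ → V₃ → Fin d → T) :
    networkDist (M.pi d) G₁ G₂ ≤
      M.mul (networkDist (M.pi d) G₁ G₃) (networkDist (M.pi d) G₃ G₂) := by
  simp only [networkDist]
  rw [hM.sInf_mul_sInf]
  refine le_iInf₂ fun _ hx => le_iInf₂ fun _ hy => ?_
  obtain ⟨R, hR₁, hR₂, rfl⟩ := hx
  obtain ⟨S, hS₁, hS₂, rfl⟩ := hy
  refine (networkDist_le _ (IsCorrespondence.comp ⟨hR₁, hR₂⟩ ⟨hS₁, hS₂⟩) G₁ G₂).trans ?_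
  exact iSup_le fun i => (graphDist_pullback_comp_le _ (hM.pi d) R S G₁ G₃ G₂ i).trans
    (M.mul_mono (le_iSup_of_le i le_rfl) (le_iSup_of_le i le_rfl))

end NetworkDist

theorem networkDist_pseudometric_general {T : Type} [CompleteLinearOrder T] (D : SDL T)
    (hinf : D.omul.InfPreserving) (d : ℕ)
    {V₁ V₂ V₃ : Type}
    (G₁ : V₁ → V₁ → Fin d → T) (G₂ : V₂ → V₂ → Fin d → T) (G₃ : V₃ → V₃ → Fin d → T) :
    (∀ (V : Type) [Fintype V] (G G' : V → V → Fin d → T),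
      G = G' → networkDist (D.omul.pi d) G G' = ⊥) ∧
    (networkDist (D.omul.pi d) G₁ G₂ = networkDist (D.omul.pi d) G₂ G₁) ∧
    (networkDist (D.omul.pi d) G₁ G₂ ≤
      D.omul.mul (networkDist (D.omul.pi d) G₁ G₃) (networkDist (D.omul.pi d) G₃ G₂)) :=
  ⟨fun _ _ G _ h => h ▸ networkDist_self _ G, networkDist_comm _ G₁ G₂,
    networkDist_pi_triangle hinf G₁ G₂ G₃⟩

/-- Let `(T, ≤, ⊗, ⊕, e)` be a symmetric duoidal lattice on a complete
linear order such that every map `c ↦ t ⊕ c` preserves arbitrary infima, and let `T^d`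
carry the product order and coordinatewise operations. Then the generalized network
distance on `T^d`-graphs with finite vertex sets satisfies: it is `e` on equal graphs,
it is symmetric, and it satisfies the triangle inequality with respect to `⊕`. -/
theorem networkDist_pseudometric {T : Type} [CompleteLinearOrder T] (D : SDL T)
    (hinf : D.omul.InfPreserving) (d : ℕ)
    {V₁ V₂ V₃ : Type} [Fintype V₁] [Fintype V₂] [Fintype V₃]
    (G₁ : V₁ → V₁ → Fin d → T) (G₂ : V₂ → V₂ → Fin d → T) (G₃ : V₃ → V₃ → Fin d → T) :
    (∀ (V : Type) [Fintype V] (G G' : V → V → Fin d → T),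
      G = G' → networkDist (D.omul.pi d) G G' = ⊥) ∧
    (networkDist (D.omul.pi d) G₁ G₂ = networkDist (D.omul.pi d) G₂ G₁) ∧
    (networkDist (D.omul.pi d) G₁ G₂ ≤
      D.omul.mul (networkDist (D.omul.pi d) G₁ G₃) (networkDist (D.omul.pi d) G₃ G₂)) :=
  networkDist_pseudometric_general D hinf d G₁ G₂ G₃
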